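/- Let G be a finite connected simple graph on n vertices with m edges and matching number μ(G), and let α be any magnetic potential on G. If n > 2μ(G), then λ_{μ(G)+n-m}(Δ_α^G) < 2 < λ_{n-μ(G)+1}(Δ_α^G). -/

import Mathlib

open Classical in
/-- The discrete magnetic Laplacian of a simple graph `G` on `Fin n` with magnetic
potential `α`. -/
noncomputable def magLap {n : ℕ} (G : SimpleGraph (Fin n)) (α : Fin n → Fin n → ℝ) :
    Matrix (Fin n) (Fin n) ℂ :=
  Matrix.of fun u v =>
    if u = v then ((G.neighborSet u).ncard : ℂ)
    else if G.Adj u v then -Complex.exp (α u v * Complex.I) else 0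

lemma magLap_isHermitian {n : ℕ} (G : SimpleGraph (Fin n)) (α : Fin n → Fin n → ℝ)
    (hα : ∀ u v, α v u = -α u v) : (magLap G α).IsHermitian := by
  rw [Matrix.IsHermitian]
  ext u v
  simp only [Matrix.conjTranspose_apply, magLap, Matrix.of_apply]
  by_cases huv : u = v
  · subst huv; simp
  · have hvu : ¬ v = u := fun h => huv h.symm
    rw [if_neg hvu, if_neg huv]
    by_cases hadj : G.Adj u v
    · rw [if_pos hadj.symm, if_pos hadj, star_neg]
      have h1 : star (Complex.exp ((α v u : ℂ) * Complex.I)) =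
          Complex.exp ((starRingEnd ℂ) ((α v u : ℂ) * Complex.I)) :=
        (Complex.exp_conj _).symm
      rw [h1]
      congr 1
      rw [hα u v]
      simp [map_mul, Complex.conj_ofReal, Complex.conj_I]
    · rw [if_neg (fun h => hadj h.symm), if_neg hadj, star_zero]

/-- The `k`-th smallest eigenvalue (1-indexed, with multiplicity) of a Hermitian
matrix, as an extended real number; `⊥` for `k = 0` and `⊤` for `k > n`. -/
noncomputable def lamb {n : ℕ} {A : Matrix (Fin n) (Fin n) ℂ} (hA : A.IsHermitian) (k : ℕ) :
    EReal :=
  if h : 1 ≤ k ∧ k ≤ n then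
    (((hA.eigenvalues ∘ Tuple.sort hA.eigenvalues) ⟨k - 1, by omega⟩ : ℝ) : EReal)
  else if k = 0 then ⊥ else ⊤

/-- The matching number of a graph: the maximal number of pairwise independent edges. -/
noncomputable def matchingNumber {n : ℕ} (G : SimpleGraph (Fin n)) : ℕ :=
  sSup {k : ℕ | ∃ M : G.Subgraph, M.IsMatching ∧ M.edgeSet.ncard = k}

/-!
Put `σ u v = e^{iα(u,v)}` and `E(x) = ∑_{u ~ v} |x u - σ u v * x v|²` (over ordered pairs), so
that `2 Re ⟨x, Δ_α x⟩ = E(x)`. By min-max, it suffices to find a subspace of dimension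
`μ + n - m` on which `E(x) < 4‖x‖²` and one of dimension `μ` on which `E(x) > 4‖x‖²`. Fix a
matching `M` with `μ` edges. The vectors with `x u = σ u v * x v` along the `m - μ` edges outside
`M` form a subspace of dimension at least `n - m + μ`; on it only the edges of `M` contribute to
`E`, and `|a - σ b|² ≤ 2|a|² + 2|b|²` gives `E(x) ≤ 4‖x‖²`. The vectors vanishing off `M` with
`x u = -σ u v * x v` along `M` form a subspace of dimension at least `μ`, on which the edges of `M`
alone contribute exactly `4‖x‖²`. In either equality case `|x|` is constant along every edge,
hence constant on the connected graph, and it vanishes at a vertex missed by `M`, which exists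
because `n > 2μ`.
-/

open Finset Matrix

lemma finrank_le_card_filter_neg_of_forall_sum_neg {ι E : Type*} [Fintype ι] [AddCommGroup E]
    [Module ℂ E] (L : E →ₗ[ℂ] ι → ℂ) (f : ι → ℝ) (W : Submodule ℂ E)
    (hW : ∀ x ∈ W, x ≠ 0 → ∑ i, f i * Complex.normSq (L x i) < 0) :
    Module.finrank ℂ W ≤ #{i | f i < 0} := by
  set S : Finset ι := {i | f i < 0}
  let φ : W →ₗ[ℂ] S → ℂ := (LinearMap.pi fun i : S => LinearMap.proj (i : ι) ∘ₗ L) ∘ₗ W.subtype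
  have hφ : Function.Injective φ := by
    rw [← LinearMap.ker_eq_bot, Submodule.eq_bot_iff]
    rintro ⟨x, hxW⟩ hx
    by_contra hx0
    have hvanish : ∀ i, f i < 0 → L x i = 0 := fun i hi =>
      congrFun hx ⟨i, mem_filter.mpr ⟨mem_univ i, hi⟩⟩
    refine (hW x hxW fun h => hx0 (Subtype.ext h)).not_ge (sum_nonneg fun i _ => ?_)
    by_cases hi : f i < 0
    · simp [hvanish i hi]
    · exact mul_nonneg (not_lt.mp hi) (Complex.normSq_nonneg _)
  simpa using LinearMap.finrank_le_finrank_of_injective hφ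

lemma Module.finrank_le_finrank_iInf_ker_add_card {K E ι : Type*} [Field K] [AddCommGroup E]
    [Module K E] [FiniteDimensional K E] [Fintype ι] (f : ι → E →ₗ[K] K) :
    Module.finrank K E ≤
      Module.finrank K (⨅ i, LinearMap.ker (f i) : Submodule K E) + Fintype.card ι := by
  have hrange := (LinearMap.range (LinearMap.pi f)).finrank_le
  rw [Module.finrank_fintype_fun_eq_card] at hrange
  have := (LinearMap.pi f).finrank_range_add_finrank_ker
  rw [LinearMap.ker_pi] at this
  omega

lemma re_star_dotProduct_self {V : Type*} [Fintype V] (x : V → ℂ) :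
    (star x ⬝ᵥ x).re = ∑ u, Complex.normSq (x u) := by
  simp [dotProduct, Complex.normSq_apply]

lemma Matrix.IsHermitian.re_star_dotProduct_mulVec_sub {n : Type*} [Fintype n] [DecidableEq n]
    {A : Matrix n n ℂ} (hA : A.IsHermitian) (c : ℝ) (x : n → ℂ) :
    (star x ⬝ᵥ A *ᵥ x).re - c * (star x ⬝ᵥ x).re =
      ∑ i, (hA.eigenvalues i - c) *
        Complex.normSq ((star (hA.eigenvectorUnitary : Matrix n n ℂ) *ᵥ x) i) := by
  set U : Matrix n n ℂ := (hA.eigenvectorUnitary : Matrix n n ℂ)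
  set y := star U *ᵥ x
  have hxU : star x ᵥ* U = star y := by
    simp [y, Matrix.star_mulVec, Matrix.star_eq_conjTranspose]
  have hA' : star x ⬝ᵥ A *ᵥ x = star y ⬝ᵥ diagonal (RCLike.ofReal ∘ hA.eigenvalues) *ᵥ y := by
    conv_lhs => rw [hA.spectral_theorem, Unitary.conjStarAlgAut_apply]
    rw [← mulVec_mulVec, ← mulVec_mulVec, dotProduct_mulVec, hxU]
  have hx : star x ⬝ᵥ x = star y ⬝ᵥ y := by
    rw [← hxU, ← dotProduct_mulVec, mulVec_mulVec,
      Unitary.mul_star_self_of_mem hA.eigenvectorUnitary.2, one_mulVec]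
  rw [hA', hx]
  simp only [dotProduct, mulVec_diagonal, Complex.re_sum, mul_sum, ← sum_sub_distrib]
  refine sum_congr rfl fun i _ => ?_
  simp [Complex.normSq_apply]
  ring

lemma Monotone.card_filter_lt_le_of_le {n : ℕ} {g : Fin n → ℝ} (hg : Monotone g) {c : ℝ}
    {j : Fin n} (hj : c ≤ g j) : #{i | g i < c} ≤ j :=
  calc #{i | g i < c} ≤ #(Iio j) := card_le_card fun i hi => by
        simp only [mem_filter, mem_univ, true_and] at hi
        exact mem_Iio.mpr (lt_of_not_ge fun hji => (hi.trans_le hj).not_ge (hg hji))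
    _ = j := Fin.card_Iio j

lemma Monotone.card_filter_gt_le_of_le {n : ℕ} {g : Fin n → ℝ} (hg : Monotone g) {c : ℝ}
    {j : Fin n} (hj : g j ≤ c) : #{i | c < g i} ≤ n - 1 - j :=
  calc #{i | c < g i} ≤ #(Ioi j) := card_le_card fun i hi => by
        simp only [mem_filter, mem_univ, true_and] at hi
        exact mem_Ioi.mpr (lt_of_not_ge fun hij => (hj.trans_lt hi).not_ge (hg hij))
    _ = n - 1 - j := Fin.card_Ioi j

section Lamb

variable {n : ℕ} {A : Matrix (Fin n) (Fin n) ℂ} (hA : A.IsHermitian) {c : ℝ} {k : ℕ}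

lemma Matrix.IsHermitian.card_filter_sort_eigenvalues (p : ℝ → Prop) [DecidablePred p] :
    #{i | p ((hA.eigenvalues ∘ Tuple.sort hA.eigenvalues) i)} = #{i | p (hA.eigenvalues i)} :=
  card_equiv (Tuple.sort hA.eigenvalues) (by simp)

lemma lamb_lt_of_le_card (hk : k ≤ #{i | hA.eigenvalues i < c}) : lamb hA k < c := by
  have hkn : k ≤ n := hk.trans (card_filter_le _ _ |>.trans_eq (by simp))
  unfold lamb
  split_ifs with h h0
  · refine EReal.coe_lt_coe_iff.mpr (lt_of_not_ge fun hge => ?_)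
    have := (Tuple.monotone_sort hA.eigenvalues).card_filter_lt_le_of_le hge
    rw [hA.card_filter_sort_eigenvalues (· < c)] at this
    simp only at this
    omega
  · exact EReal.bot_lt_coe c
  · omega

lemma lt_lamb_of_le_card (hk : k ≤ #{i | c < hA.eigenvalues i}) : c < lamb hA (n - k + 1) := by
  have hkn : k ≤ n := hk.trans (card_filter_le _ _ |>.trans_eq (by simp))
  unfold lamb
  split_ifs with h h0
  · refine EReal.coe_lt_coe_iff.mpr (lt_of_not_ge fun hge => ?_)
    have := (Tuple.monotone_sort hA.eigenvalues).card_filter_gt_le_of_le hge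
    rw [hA.card_filter_sort_eigenvalues (c < ·)] at this
    simp only at this
    omega
  · contradiction
  · exact EReal.coe_lt_top c

lemma lamb_lt_of_le_finrank (W : Submodule ℂ (Fin n → ℂ))
    (hW : ∀ x ∈ W, x ≠ 0 → (star x ⬝ᵥ A *ᵥ x).re < c * (star x ⬝ᵥ x).re)
    (hk : k ≤ Module.finrank ℂ W) : lamb hA k < c := by
  refine lamb_lt_of_le_card hA (hk.trans ?_)
  simpa using finrank_le_card_filter_neg_of_forall_sum_neg
    (mulVecLin (star (hA.eigenvectorUnitary : Matrix _ _ ℂ))) (fun i => hA.eigenvalues i - c) W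
    fun x hx hx0 => by
      rw [mulVecLin_apply, ← hA.re_star_dotProduct_mulVec_sub]
      linarith [hW x hx hx0]

lemma lt_lamb_of_le_finrank (W : Submodule ℂ (Fin n → ℂ))
    (hW : ∀ x ∈ W, x ≠ 0 → c * (star x ⬝ᵥ x).re < (star x ⬝ᵥ A *ᵥ x).re)
    (hk : k ≤ Module.finrank ℂ W) : c < lamb hA (n - k + 1) := by
  refine lt_lamb_of_le_card hA (hk.trans ?_)
  simpa using finrank_le_card_filter_neg_of_forall_sum_neg
    (mulVecLin (star (hA.eigenvectorUnitary : Matrix _ _ ℂ))) (fun i => c - hA.eigenvalues i) W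
    fun x hx hx0 => by
      have := hA.re_star_dotProduct_mulVec_sub c x
      simp only [mulVecLin_apply, ← neg_sub (hA.eigenvalues _), neg_mul, sum_neg_distrib]
      linarith [hW x hx hx0]

end Lamb

open scoped Classical

namespace SimpleGraph

variable {V : Type*}

def parallelSubmodule (H : SimpleGraph V) (τ : V → V → ℂ) : Submodule ℂ (V → ℂ) where
  carrier := {x | ∀ u v, H.Adj u v → x u = τ u v * x v}
  add_mem' hx hy u v h := by simp [hx u v h, hy u v h, mul_add]
  zero_mem' := by simp
  smul_mem' c x hx u v h := by simp [hx u v h, mul_left_comm]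

noncomputable def twistedEnergy [Fintype V] (H : SimpleGraph V) (σ : V → V → ℂ) (x : V → ℂ) :
    ℝ :=
  ∑ u, ∑ v, if H.Adj u v then Complex.normSq (x u - σ u v * x v) else 0

variable {G H : SimpleGraph V} {M : G.Subgraph} {σ : V → V → ℂ} {x : V → ℂ} {w : V}

lemma normSq_eq_of_mem_parallelSubmodule (hσ : ∀ u v, Complex.normSq (σ u v) = 1)
    (hx : x ∈ H.parallelSubmodule σ) {u v : V} (huv : H.Adj u v) :
    Complex.normSq (x u) = Complex.normSq (x v) := by
  rw [hx u v huv, Complex.normSq_mul, hσ, one_mul]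

lemma Connected.eq_zero_of_normSq_eq (hG : G.Connected)
    (hx : ∀ u v, G.Adj u v → Complex.normSq (x u) = Complex.normSq (x v)) (hw : x w = 0) :
    x = 0 := by
  funext u
  obtain ⟨p⟩ := hG.preconnected u w
  have : Complex.normSq (x u) = Complex.normSq (x w) := by
    induction p with
    | nil => rfl
    | cons h _ ih => exact (hx _ _ h).trans (ih hw)
  simpa [hw] using this

lemma Connected.eq_zero_of_mem_parallelSubmodule (hG : G.Connected)
    (hσ : ∀ u v, Complex.normSq (σ u v) = 1) (hH : x ∈ H.parallelSubmodule (-σ))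
    (hGH : x ∈ (G \ H).parallelSubmodule σ) (hw : x w = 0) : x = 0 := by
  refine hG.eq_zero_of_normSq_eq (fun u v huv => ?_) hw
  by_cases h : H.Adj u v
  · exact normSq_eq_of_mem_parallelSubmodule (by simpa using hσ) hH h
  · exact normSq_eq_of_mem_parallelSubmodule hσ hGH ((sdiff_adj ..).mpr ⟨huv, h⟩)

variable [Fintype V]

lemma card_le_finrank_parallelSubmodule_add_ncard (H : SimpleGraph V) {τ : V → V → ℂ}
    (hτ : ∀ u v, τ u v * τ v u = 1) :
    Fintype.card V ≤ Module.finrank ℂ (H.parallelSubmodule τ) + H.edgeSet.ncard := by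
  -- one constraint per edge, along the orientation `Quot.out` picks; `hτ` gives the other one
  let f : H.edgeSet → (V → ℂ) →ₗ[ℂ] ℂ := fun e =>
    LinearMap.proj (Quot.out e.1).1 -
      τ (Quot.out e.1).1 (Quot.out e.1).2 • LinearMap.proj (Quot.out e.1).2
  have hle : (⨅ e, LinearMap.ker (f e)) ≤ H.parallelSubmodule τ := by
    intro x hx u v huv
    have hx' : x (Quot.out s(u, v)).1 = τ _ _ * x (Quot.out s(u, v)).2 :=
      sub_eq_zero.mp ((Submodule.mem_iInf _).mp hx ⟨s(u, v), huv⟩)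
    have hout : s((Quot.out s(u, v)).1, (Quot.out s(u, v)).2) = s(u, v) := Quot.out_eq _
    generalize Quot.out s(u, v) = p at hx' hout
    rcases Sym2.eq_iff.mp hout with ⟨rfl, rfl⟩ | ⟨rfl, rfl⟩
    · exact hx'
    · rw [hx', ← mul_assoc, hτ, one_mul]
  have := Module.finrank_le_finrank_iInf_ker_add_card f
  rw [Module.finrank_fintype_fun_eq_card, Set.fintypeCard_eq_ncard] at this
  have := Submodule.finrank_mono hle
  omega

lemma twistedEnergy_nonneg : 0 ≤ H.twistedEnergy σ x :=
  sum_nonneg fun _ _ => sum_nonneg fun _ _ => by split_ifs <;> simp [Complex.normSq_nonneg]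

lemma twistedEnergy_eq_zero_iff : H.twistedEnergy σ x = 0 ↔ x ∈ H.parallelSubmodule σ := by
  have hnn : ∀ u v, 0 ≤ if H.Adj u v then Complex.normSq (x u - σ u v * x v) else 0 :=
    fun u v => by split_ifs <;> simp [Complex.normSq_nonneg]
  simp only [twistedEnergy, sum_eq_zero_iff_of_nonneg fun u _ => sum_nonneg fun v _ => hnn u v,
    sum_eq_zero_iff_of_nonneg fun v _ => hnn _ v, mem_univ, true_implies]
  simp [parallelSubmodule, sub_eq_zero]

lemma twistedEnergy_eq_add_sdiff (hHG : H ≤ G) :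
    G.twistedEnergy σ x = H.twistedEnergy σ x + (G \ H).twistedEnergy σ x := by
  simp only [twistedEnergy, ← sum_add_distrib, sdiff_adj]
  refine sum_congr rfl fun u _ => sum_congr rfl fun v _ => ?_
  by_cases hH : H.Adj u v
  · simp [hH, hHG hH]
  · simp [hH]

lemma sum_sum_ite_adj_right (H : SimpleGraph V) (f : V → ℝ) :
    ∑ u, ∑ v, (if H.Adj u v then f v else 0) = ∑ u, ∑ v, if H.Adj u v then f u else 0 := by
  rw [sum_comm]
  simp_rw [H.adj_comm]

lemma sum_ite_adj (H : SimpleGraph V) (a : ℝ) (u : V) :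
    ∑ v, (if H.Adj u v then a else 0) = #{v | H.Adj u v} * a := by
  rw [← sum_filter, sum_const, nsmul_eq_mul]

namespace Subgraph.IsMatching

lemma card_filter_adj (hM : M.IsMatching) (u : V) :
    #{v | M.Adj u v} = if u ∈ M.verts then 1 else 0 := by
  split_ifs with hu
  · obtain ⟨w, hw, hw_unique⟩ := hM hu
    exact card_eq_one.mpr ⟨w, by ext v; simpa using ⟨hw_unique v, fun h => h ▸ hw⟩⟩
  · exact card_eq_zero.mpr (filter_eq_empty_iff.mpr fun v _ h => hu h.fst_mem)

lemma card_filter_mem_verts (hM : M.IsMatching) : #{u | u ∈ M.verts} = 2 * M.edgeSet.ncard := by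
  rw [← Subgraph.edgeSet_spanningCoe, ← Set.fintypeCard_eq_ncard, ← edgeFinset_card,
    ← sum_degrees_eq_twice_card_edges, card_filter]
  refine sum_congr rfl fun u _ => ?_
  rw [← card_neighborFinset_eq_degree, neighborFinset_eq_filter]
  exact (hM.card_filter_adj u).symm

lemma exists_not_mem_verts (hM : M.IsMatching) (hcard : 2 * M.edgeSet.ncard < Fintype.card V) :
    ∃ w, w ∉ M.verts := by
  by_contra! hall
  have := hM.card_filter_mem_verts
  rw [filter_true_of_mem fun u _ => hall u, card_univ] at this
  omega

lemma ncard_edgeSet_le_finrank (hM : M.IsMatching) (hσ : ∀ u v, σ u v * σ v u = 1) :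
    M.edgeSet.ncard ≤ Module.finrank ℂ
      ↥(M.spanningCoe.parallelSubmodule (-σ) ⊓ Submodule.pi M.vertsᶜ fun _ => ⊥) := by
  have hP := M.spanningCoe.card_le_finrank_parallelSubmodule_add_ncard (τ := -σ)
    (by simpa using hσ)
  have hZ := Module.finrank_le_finrank_iInf_ker_add_card fun u : ↥M.vertsᶜ =>
    LinearMap.proj (R := ℂ) (φ := fun _ : V => ℂ) (u : V)
  have hle : (⨅ u : ↥M.vertsᶜ, LinearMap.ker (LinearMap.proj (R := ℂ) (φ := fun _ : V => ℂ) ↑u))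
      ≤ Submodule.pi M.vertsᶜ fun _ => ⊥ := fun x hx u hu => by
    simpa using (Submodule.mem_iInf _).mp hx ⟨u, hu⟩
  have hverts := card_filter_le univ (· ∈ M.verts)
  rw [Subgraph.edgeSet_spanningCoe] at hP
  rw [Module.finrank_fintype_fun_eq_card, Fintype.card_compl_set, Fintype.card_subtype,
    hM.card_filter_mem_verts] at hZ
  rw [hM.card_filter_mem_verts, card_univ] at hverts
  have hinf := Submodule.finrank_sup_add_finrank_inf_eq (M.spanningCoe.parallelSubmodule (-σ))
    (Submodule.pi M.vertsᶜ fun _ => ⊥)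
  have hsup := Submodule.finrank_le (M.spanningCoe.parallelSubmodule (-σ) ⊔
    Submodule.pi M.vertsᶜ fun _ => ⊥)
  rw [Module.finrank_fintype_fun_eq_card] at hsup
  have := Submodule.finrank_mono hle
  omega

lemma twistedEnergy_add_twistedEnergy_neg (hM : M.IsMatching)
    (hσ : ∀ u v, Complex.normSq (σ u v) = 1) (x : V → ℂ) :
    M.spanningCoe.twistedEnergy σ x + M.spanningCoe.twistedEnergy (-σ) x =
      4 * ∑ u with u ∈ M.verts, Complex.normSq (x u) := by
  have hpar : ∀ u v, Complex.normSq (x u - σ u v * x v) + Complex.normSq (x u - (-σ) u v * x v) =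
      2 * Complex.normSq (x u) + 2 * Complex.normSq (x v) := fun u v => by
    simp only [Pi.neg_apply, neg_mul, sub_neg_eq_add, Complex.normSq_sub, Complex.normSq_add,
      Complex.normSq_mul, hσ]
    ring
  have hdeg : ∀ u, (∑ v, if M.spanningCoe.Adj u v then Complex.normSq (x u) else 0) =
      if u ∈ M.verts then Complex.normSq (x u) else 0 := fun u => by
    rw [sum_ite_adj]
    simp only [Subgraph.spanningCoe_adj, hM.card_filter_adj]
    split_ifs <;> simp
  calc _ = ∑ u, ∑ v, if M.spanningCoe.Adj u v then
          2 * Complex.normSq (x u) + 2 * Complex.normSq (x v) else 0 := by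
        simp only [twistedEnergy, ← sum_add_distrib]
        refine sum_congr rfl fun u _ => sum_congr rfl fun v _ => ?_
        split_ifs
        · exact hpar u v
        · simp
    _ = 2 * (∑ u, ∑ v, if M.spanningCoe.Adj u v then Complex.normSq (x u) else 0) +
          2 * ∑ u, ∑ v, if M.spanningCoe.Adj u v then Complex.normSq (x v) else 0 := by
        simp only [mul_sum, ← sum_add_distrib]
        refine sum_congr rfl fun u _ => sum_congr rfl fun v _ => ?_
        split_ifs <;> ring
    _ = 4 * ∑ u with u ∈ M.verts, Complex.normSq (x u) := by
        rw [sum_sum_ite_adj_right, sum_filter]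
        simp only [hdeg]
        ring

lemma twistedEnergy_lt_of_mem_parallelSubmodule_sdiff (hM : M.IsMatching) (hG : G.Connected)
    (hσ : ∀ u v, Complex.normSq (σ u v) = 1) (hw : w ∉ M.verts)
    (hx : x ∈ (G \ M.spanningCoe).parallelSubmodule σ) (hx0 : x ≠ 0) :
    G.twistedEnergy σ x < 4 * ∑ u, Complex.normSq (x u) := by
  have hsplit := twistedEnergy_eq_add_sdiff (σ := σ) (x := x) M.spanningCoe_le
  rw [twistedEnergy_eq_zero_iff.mpr hx, add_zero] at hsplit
  have hpar := hM.twistedEnergy_add_twistedEnergy_neg hσ x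
  rw [← sum_filter_add_sum_filter_not univ (· ∈ M.verts)]
  have hoff : 0 ≤ ∑ u with u ∉ M.verts, Complex.normSq (x u) :=
    sum_nonneg fun u _ => Complex.normSq_nonneg _
  have hneg : 0 ≤ M.spanningCoe.twistedEnergy (-σ) x := twistedEnergy_nonneg
  by_contra hge
  have hneg0 : M.spanningCoe.twistedEnergy (-σ) x = 0 := by linarith
  have hoff0 : ∑ u with u ∉ M.verts, Complex.normSq (x u) = 0 := by linarith
  have hxw : x w = 0 := by
    rw [sum_eq_zero_iff_of_nonneg fun u _ => Complex.normSq_nonneg _] at hoff0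
    simpa using hoff0 w (by simpa using hw)
  exact hx0 (hG.eq_zero_of_mem_parallelSubmodule hσ (twistedEnergy_eq_zero_iff.mp hneg0) hx hxw)

lemma lt_twistedEnergy_of_mem_parallelSubmodule_neg (hM : M.IsMatching) (hG : G.Connected)
    (hσ : ∀ u v, Complex.normSq (σ u v) = 1) (hw : w ∉ M.verts)
    (hx : x ∈ M.spanningCoe.parallelSubmodule (-σ)) (hxM : ∀ u ∉ M.verts, x u = 0)
    (hx0 : x ≠ 0) :
    4 * ∑ u, Complex.normSq (x u) < G.twistedEnergy σ x := by
  have hsplit := twistedEnergy_eq_add_sdiff (σ := σ) (x := x) M.spanningCoe_le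
  have hpar := hM.twistedEnergy_add_twistedEnergy_neg hσ x
  rw [twistedEnergy_eq_zero_iff.mpr hx, add_zero] at hpar
  have hoff : ∑ u with u ∉ M.verts, Complex.normSq (x u) = 0 :=
    sum_eq_zero fun u hu => by simp [hxM u (mem_filter.mp hu).2]
  rw [← sum_filter_add_sum_filter_not univ (· ∈ M.verts), hoff, add_zero, ← hpar]
  by_contra hle
  have hsdiff : (G \ M.spanningCoe).twistedEnergy σ x = 0 :=
    le_antisymm (by linarith) twistedEnergy_nonneg
  exact hx0 (hG.eq_zero_of_mem_parallelSubmodule hσ hx (twistedEnergy_eq_zero_iff.mp hsdiff)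
    (hxM w hw))

end Subgraph.IsMatching

end SimpleGraph

noncomputable def magPhase {V : Type*} (α : V → V → ℝ) (u v : V) : ℂ :=
  Complex.exp (α u v * Complex.I)

lemma normSq_magPhase {V : Type*} (α : V → V → ℝ) (u v : V) :
    Complex.normSq (magPhase α u v) = 1 := by
  rw [Complex.normSq_eq_norm_sq, magPhase, Complex.norm_exp_ofReal_mul_I, one_pow]

lemma magPhase_mul_magPhase_swap {V : Type*} {α : V → V → ℝ} (hα : ∀ u v, α v u = -α u v)
    (u v : V) : magPhase α u v * magPhase α v u = 1 := by
  rw [magPhase, magPhase, ← Complex.exp_add, hα u v]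
  simp

lemma magLap_mulVec_apply {n : ℕ} (G : SimpleGraph (Fin n)) (α : Fin n → Fin n → ℝ)
    (x : Fin n → ℂ) (u : Fin n) :
    (magLap G α *ᵥ x) u = ∑ v, if G.Adj u v then x u - magPhase α u v * x v else 0 := by
  have hdeg : ((G.neighborSet u).ncard : ℂ) = #{v | G.Adj u v} := by
    rw [SimpleGraph.neighborSet, Set.ncard_eq_toFinset_card', Set.toFinset_ofPred]
  have hentry : ∀ v, magLap G α u v * x v =
      (if u = v then ((G.neighborSet u).ncard : ℂ) * x u else 0) +
        if G.Adj u v then -(magPhase α u v * x v) else 0 := fun v => by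
    by_cases huv : u = v
    · subst huv; simp [magLap]
    · simp [magLap, magPhase, huv]
  simp only [mulVec, dotProduct, hentry, sum_add_distrib, sum_ite_eq, mem_univ, if_true, hdeg,
    ← sum_filter]
  rw [sum_sub_distrib, sum_const, nsmul_eq_mul, sub_eq_add_neg, sum_neg_distrib]

lemma two_mul_re_star_dotProduct_magLap_mulVec {n : ℕ} (G : SimpleGraph (Fin n))
    (α : Fin n → Fin n → ℝ) (x : Fin n → ℂ) :
    2 * (star x ⬝ᵥ magLap G α *ᵥ x).re = G.twistedEnergy (magPhase α) x := by
  have hterm : ∀ a b σ : ℂ, Complex.normSq σ = 1 → Complex.normSq (a - σ * b) =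
      2 * (star a * (a - σ * b)).re + (Complex.normSq b - Complex.normSq a) := by
    intro a b σ hσ
    rw [Complex.normSq_apply] at hσ
    simp [Complex.normSq_apply, Complex.mul_re, Complex.mul_im]
    linear_combination (b.re ^ 2 + b.im ^ 2) * hσ
  have hsymm := G.sum_sum_ite_adj_right fun v => Complex.normSq (x v)
  rw [← sub_eq_zero] at hsymm
  rw [← sub_zero (G.twistedEnergy _ _), ← hsymm]
  simp only [SimpleGraph.twistedEnergy, dotProduct, magLap_mulVec_apply, mul_sum, Complex.re_sum,
    ← sum_sub_distrib]
  refine sum_congr rfl fun u _ => sum_congr rfl fun v _ => ?_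
  split_ifs
  · rw [hterm _ _ _ (normSq_magPhase α u v)]
    simp
  · simp

lemma exists_isMatching_ncard_eq_matchingNumber {n : ℕ} (G : SimpleGraph (Fin n)) :
    ∃ M : G.Subgraph, M.IsMatching ∧ M.edgeSet.ncard = matchingNumber G :=
  Nat.sSup_mem (s := {k | ∃ M : G.Subgraph, M.IsMatching ∧ M.edgeSet.ncard = k})
    ⟨0, ⊥, fun _ h => h.elim, by simp⟩
    ⟨G.edgeSet.ncard, by rintro _ ⟨M, -, rfl⟩; exact Set.ncard_le_ncard M.edgeSet_subset⟩

open SimpleGraph in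
theorem lamb_magLap_lt_two_and_two_lt_lamb_of_isMatching {n : ℕ} {G : SimpleGraph (Fin n)}
    (hG : G.Connected) {α : Fin n → Fin n → ℝ} (hα : ∀ u v, α v u = -α u v) {M : G.Subgraph}
    (hM : M.IsMatching) (hMn : 2 * M.edgeSet.ncard < n) :
    lamb (magLap_isHermitian G α hα) (M.edgeSet.ncard + n - G.edgeSet.ncard) < ((2 : ℝ) : EReal) ∧
    ((2 : ℝ) : EReal) < lamb (magLap_isHermitian G α hα) (n - M.edgeSet.ncard + 1) := by
  obtain ⟨w, hw⟩ := hM.exists_not_mem_verts (by simpa using hMn)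
  have hform := two_mul_re_star_dotProduct_magLap_mulVec G α
  constructor
  · refine lamb_lt_of_le_finrank _ ((G \ M.spanningCoe).parallelSubmodule (magPhase α))
      (fun x hx hx0 => ?_) ?_
    · have := hM.twistedEnergy_lt_of_mem_parallelSubmodule_sdiff hG (normSq_magPhase α) hw hx hx0
      rw [re_star_dotProduct_self]
      linarith [hform x]
    · have := (G \ M.spanningCoe).card_le_finrank_parallelSubmodule_add_ncard
        (magPhase_mul_magPhase_swap hα)
      rw [edgeSet_sdiff, Subgraph.edgeSet_spanningCoe, Set.ncard_sdiff M.edgeSet_subset,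
        Fintype.card_fin] at this
      have := Set.ncard_le_ncard M.edgeSet_subset
      omega
  · refine lt_lamb_of_le_finrank _ _ (fun x hx hx0 => ?_)
      (hM.ncard_edgeSet_le_finrank (magPhase_mul_magPhase_swap hα))
    obtain ⟨hpar, hvan⟩ := Submodule.mem_inf.mp hx
    have := hM.lt_twistedEnergy_of_mem_parallelSubmodule_neg hG (normSq_magPhase α) hw hpar
      (fun u hu => by simpa using hvan u hu) hx0
    rw [re_star_dotProduct_self]
    linarith [hform x]

/-- For a connected graph `G` on `n` vertices with `m` edges,
matching number `μ(G)` and any magnetic potential `α`, if `n > 2μ(G)` then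
`λ_{μ(G)+n-m}(Δ_α^G) < 2 < λ_{n-μ(G)+1}(Δ_α^G)`. -/
theorem connected_matching_strict_bounds {n m : ℕ} (G : SimpleGraph (Fin n))
    (hG : G.Connected) (hm : G.edgeSet.ncard = m)
    (α : Fin n → Fin n → ℝ) (hα : ∀ u v, α v u = -α u v)
    (hμ : 2 * matchingNumber G < n) :
    lamb (magLap_isHermitian G α hα) (matchingNumber G + n - m) < ((2 : ℝ) : EReal) ∧
    ((2 : ℝ) : EReal) < lamb (magLap_isHermitian G α hα) (n - matchingNumber G + 1) := by
  obtain ⟨M, hM, hMμ⟩ := exists_isMatching_ncard_eq_matchingNumber G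
  rw [← hMμ] at hμ ⊢
  rw [← hm]
  exact lamb_magLap_lt_two_and_two_lt_lamb_of_isMatching hG hα hM hμ
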